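/- arXiv:2011.12613 — 5 statements merged into one kernel-verified Lean document; each statement's English description precedes it below -/
import Mathlib

section
/- With m the multiplicity function defined by the recursion in the context: for all integers a ≥ b ≥ 0 and k ≥ 0 with a + b ≤ k and a + b ≡ k (mod 2), and all n ≥ max(k,1), one has m(a,b,n,k) ≠ 0. -/
/-- `ε(a,b) = 1` if `(a,b) ∈ {(0,0),(1,1)}`, and `0` otherwise. -/
def eps (a b : ℤ) : ℕ := if (a = 0 ∧ b = 0) ∨ (a = 1 ∧ b = 1) then 1 else 0

/-- `T₁(a,b,·,k)` applied to a fixed-level slice `f` of the multiplicity function. -/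
def T1 (f : ℤ → ℤ → ℤ → ℕ) (a b k : ℤ) : ℕ :=
  f (a + 1) b k + f a (b + 1) k + f (a - 1) b k + f a (b - 1) k

/-- `T₂(a,b,·,k)` applied to a fixed-level slice `f` of the multiplicity function. -/
def T2 (f : ℤ → ℤ → ℤ → ℕ) (a b k : ℤ) : ℕ :=
  (2 - eps a b) * f a b k + f (a - 1) (b - 1) k + f (a - 1) (b + 1) k
    + f (a + 1) (b - 1) k + f (a + 1) (b + 1) k

/-- The base case `n = 1` of the multiplicity function. -/
def mBase (a b k : ℤ) : ℕ :=
  if (a = 0 ∧ b = 0 ∧ k = 0) ∨ (a = 1 ∧ b = 0 ∧ k = 1) ∨ (a = 0 ∧ b = 0 ∧ k = 2)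
      ∨ (a = 1 ∧ b = 1 ∧ k = 2) ∨ (a = 1 ∧ b = 0 ∧ k = 3) ∨ (a = 0 ∧ b = 0 ∧ k = 4)
  then 1 else 0

/-- Auxiliary recursion, indexed by `n : ℕ`: `mAux n a b k = m(a,b,n,k)`. -/
def mAux : ℕ → ℤ → ℤ → ℤ → ℕ
  | 0, _, _, _ => 0
  | 1, a, b, k => mBase a b k
  | (n + 2), a, b, k =>
      if b ≤ a ∧ 0 ≤ b ∧ 0 ≤ k then
        mAux (n + 1) a b k + T1 (mAux (n + 1)) a b (k - 1) + T2 (mAux (n + 1)) a b (k - 2)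
          + T1 (mAux (n + 1)) a b (k - 3) + mAux (n + 1) a b (k - 4)
      else 0

/-- The multiplicity function `m(a,b,n,k)`: the multiplicity of the irreducible
`Sp(4,ℂ)`-representation `V_{a,b}` in `H^k(Aⁿ; ℚ)`; it vanishes unless
`a ≥ b ≥ 0`, `n ≥ 1`, `k ≥ 0`. -/
def mult (a b n k : ℤ) : ℕ := if 1 ≤ n then mAux n.toNat a b k else 0

lemma mBase_eq_zero (a b k : ℤ) (h : ¬(b ≤ a ∧ 0 ≤ b ∧ 0 ≤ k)) : mBase a b k = 0 := by
  unfold mBase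
  rw [if_neg]
  omega

lemma mAux_eq_zero (n : ℕ) (a b k : ℤ) (h : ¬(b ≤ a ∧ 0 ≤ b ∧ 0 ≤ k)) :
    mAux n a b k = 0 := by
  match n with
  | 0 => rfl
  | 1 => exact mBase_eq_zero a b k h
  | (n+2) => simp only [mAux, if_neg h]

lemma mAux_mono (n : ℕ) (hn : 1 ≤ n) (a b k : ℤ) : mAux n a b k ≤ mAux (n+1) a b k := by
  obtain ⟨j, rfl⟩ : ∃ j, n = j + 1 := ⟨n - 1, by omega⟩
  by_cases h : b ≤ a ∧ 0 ≤ b ∧ 0 ≤ k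
  · show mAux (j+1) a b k ≤ mAux (j+2) a b k
    simp only [mAux, if_pos h]
    omega
  · rw [mAux_eq_zero _ _ _ _ h]
    exact Nat.zero_le _

lemma mAux_mono_le (n n' : ℕ) (a b k : ℤ) (h1 : 1 ≤ n) (hle : n ≤ n')
    (h : mAux n a b k ≠ 0) : mAux n' a b k ≠ 0 := by
  induction n', hle using Nat.le_induction with
  | base => exact h
  | succ m hm ih =>
      have h2 := mAux_mono m (by omega) a b k
      omega

lemma stepA (n : ℕ) (hn : 1 ≤ n) (a b k : ℤ) (hb : 0 ≤ b) (hba : b ≤ a) (hk : 0 ≤ k)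
    (h : mAux n a b k ≠ 0) : mAux (n+1) (a+1) b (k+1) ≠ 0 := by
  obtain ⟨j, rfl⟩ : ∃ j, n = j + 1 := ⟨n - 1, by omega⟩
  show mAux (j+2) (a+1) b (k+1) ≠ 0
  simp only [mAux, if_pos (show b ≤ a+1 ∧ 0 ≤ b ∧ 0 ≤ k+1 by omega)]
  simp only [T1, add_sub_cancel_right]
  omega

lemma stepB (n : ℕ) (hn : 1 ≤ n) (a b k : ℤ) (hb : 0 ≤ b) (hba : b + 1 ≤ a) (hk : 0 ≤ k)
    (h : mAux n a b k ≠ 0) : mAux (n+1) a (b+1) (k+1) ≠ 0 := by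
  obtain ⟨j, rfl⟩ : ∃ j, n = j + 1 := ⟨n - 1, by omega⟩
  show mAux (j+2) a (b+1) (k+1) ≠ 0
  simp only [mAux, if_pos (show b+1 ≤ a ∧ 0 ≤ b+1 ∧ 0 ≤ k+1 by omega)]
  simp only [T1, add_sub_cancel_right]
  omega

lemma stepK (n : ℕ) (hn : 1 ≤ n) (a b k : ℤ) (hb : 0 ≤ b) (hba : b ≤ a) (hk : 0 ≤ k)
    (h : mAux n a b k ≠ 0) : mAux (n+1) a b (k+2) ≠ 0 := by
  obtain ⟨j, rfl⟩ : ∃ j, n = j + 1 := ⟨n - 1, by omega⟩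
  show mAux (j+2) a b (k+2) ≠ 0
  simp only [mAux, if_pos (show b ≤ a ∧ 0 ≤ b ∧ 0 ≤ k+2 by omega)]
  simp only [T2, add_sub_cancel_right]
  have he : eps a b ≤ 1 := by unfold eps; split <;> omega
  have hm : mAux (j+1) a b k ≤ (2 - eps a b) * mAux (j+1) a b k := by
    calc mAux (j+1) a b k = 1 * mAux (j+1) a b k := (one_mul _).symm
    _ ≤ (2 - eps a b) * mAux (j+1) a b k := Nat.mul_le_mul_right _ (by omega)
  omega

lemma key (K : ℕ) : ∀ a b : ℤ, 0 ≤ b → b ≤ a → a + b ≤ (K:ℤ) →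
    (a+b) % 2 = (K:ℤ) % 2 → mAux (max K 1) a b (K:ℤ) ≠ 0 := by
  induction K using Nat.strong_induction_on with
  | _ K IH =>
  intro a b hb hba hsum hpar
  by_cases hb1 : 1 ≤ b
  · have hK2 : 2 ≤ K := by omega
    have ec : ((K-1:ℕ):ℤ) = (K:ℤ) - 1 := by omega
    have h1 := IH (K-1) (by omega) a (b-1) (by omega) (by omega) (by omega) (by omega)
    rw [show max (K-1) 1 = K-1 by omega, ec] at h1
    have h2 := stepB (K-1) (by omega) a (b-1) ((K:ℤ)-1) (by omega) (by omega) (by omega) h1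
    rw [show K-1+1 = K by omega, sub_add_cancel, sub_add_cancel] at h2
    rw [show max K 1 = K by omega]
    exact h2
  · by_cases ha1 : 1 ≤ a
    · by_cases hK1 : K = 1
      · have ha : a = 1 := by omega
        have hbz : b = 0 := by omega
        subst ha hbz hK1
        show mAux 1 1 0 1 ≠ 0
        simp [mAux, mBase]
      · have hK2 : 2 ≤ K := by omega
        have ec : ((K-1:ℕ):ℤ) = (K:ℤ) - 1 := by omega
        have h1 := IH (K-1) (by omega) (a-1) b (by omega) (by omega) (by omega) (by omega)
        rw [show max (K-1) 1 = K-1 by omega, ec] at h1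
        have h2 := stepA (K-1) (by omega) (a-1) b ((K:ℤ)-1) (by omega) (by omega) (by omega) h1
        rw [show K-1+1 = K by omega, sub_add_cancel, sub_add_cancel] at h2
        rw [show max K 1 = K by omega]
        exact h2
    · have ha : a = 0 := by omega
      have hbz : b = 0 := by omega
      subst ha hbz
      by_cases hK0 : K = 0
      · subst hK0
        show mAux 1 0 0 0 ≠ 0
        simp [mAux, mBase]
      · have hK2 : 2 ≤ K := by omega
        have ec : ((K-2:ℕ):ℤ) = (K:ℤ) - 2 := by omega
        have h1 := IH (K-2) (by omega) 0 0 le_rfl le_rfl (by omega) (by omega)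
        rw [ec] at h1
        have h2 := stepK (max (K-2) 1) (by omega) 0 0 ((K:ℤ)-2) le_rfl le_rfl (by omega) h1
        rw [sub_add_cancel] at h2
        exact mAux_mono_le _ _ _ _ _ (by omega) (by omega) h2

/-- For all `a ≥ b ≥ 0` and `k ≥ 0` with `a + b ≤ k` and `a + b ≡ k (mod 2)`, and all
`n ≥ max(k,1)`, the multiplicity `m(a,b,n,k)` is nonzero. -/
theorem mult_ne_zero (a b n k : ℤ) (hba : b ≤ a) (hb : 0 ≤ b) (hk : 0 ≤ k)
    (hbk : a + b ≤ k) (hmod : a + b ≡ k [ZMOD 2]) (hn : max k 1 ≤ n) :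
    mult a b n k ≠ 0 := by
  obtain ⟨K, rfl⟩ : ∃ K : ℕ, (K:ℤ) = k := ⟨k.toNat, by omega⟩
  have hpar : (a+b) % 2 = (K:ℤ) % 2 := hmod
  have h := key K a b hb hba hbk hpar
  unfold mult
  rw [if_pos (show (1:ℤ) ≤ n by omega)]
  exact mAux_mono_le _ _ _ _ _ (by omega) (by omega) h
end

section
/- With m the multiplicity function defined by the recursion in the context: for every integer M ≥ 1, m(0,0,M,2) = C(M+1,2) = M(M+1)/2. -/
lemma mAux_neg (n : ℕ) (a b k : ℤ) (hk : k < 0) : mAux n a b k = 0 := by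
  match n with
  | 0 => rfl
  | 1 => unfold mAux mBase; split <;> omega
  | (n + 2) => unfold mAux; split <;> omega

lemma mAux_bad (n : ℕ) (a b k : ℤ) (h : ¬(b ≤ a ∧ 0 ≤ b)) : mAux n a b k = 0 := by
  match n with
  | 0 => rfl
  | 1 => unfold mAux mBase; split <;> omega
  | (n + 2) => unfold mAux; split <;> omega

lemma mAux_zeroK (n : ℕ) (a b : ℤ) : mAux (n + 1) a b 0 = mBase a b 0 := by
  induction n with
  | zero => rfl
  | succ n ih =>
    show mAux (n + 2) a b 0 = _
    unfold mAux
    split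
    · simp [T1, T2, mAux_neg, ih]
    · unfold mBase; split <;> omega

lemma mAux_oneK (n : ℕ) : mAux (n + 1) 1 0 1 = n + 1 := by
  induction n with
  | zero => rfl
  | succ n ih =>
    show mAux (n + 2) 1 0 1 = _
    unfold mAux
    rw [if_pos (by norm_num)]
    simp only [T1, T2]
    norm_num [mAux_neg, mAux_zeroK, ih, mBase]

lemma mAux_twoK (n : ℕ) : mAux (n + 1) 0 0 2 = (n + 2).choose 2 := by
  induction n with
  | zero => rfl
  | succ n ih =>
    show mAux (n + 2) 0 0 2 = _
    unfold mAux
    rw [if_pos (by norm_num)]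
    simp only [T1, T2]
    norm_num [mAux_neg, mAux_zeroK, mAux_oneK, ih, mBase, eps,
      mAux_bad (n+1) (-1) 0 1 (by omega), mAux_bad (n+1) 0 (-1) 1 (by omega),
      mAux_bad (n+1) 0 1 1 (by omega),
      mAux_bad (n+1) (-1) (-1) 0 (by omega), mAux_bad (n+1) (-1) 1 0 (by omega),
      mAux_bad (n+1) 1 (-1) 0 (by omega)]
    rw [show n + 1 + 2 = (n + 2) + 1 from rfl, Nat.choose_succ_succ (n + 2) 1,
      Nat.choose_one_right]
    simp only [Nat.succ_eq_add_one, Nat.reduceAdd]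
    omega

/-- For every integer `M ≥ 1`, `m(0,0,M,2) = C(M+1,2) = M(M+1)/2`. -/
theorem mult_zero_zero_two (M : ℤ) (hM : 1 ≤ M) :
    mult 0 0 M 2 = (M.toNat + 1).choose 2 ∧ (mult 0 0 M 2 : ℤ) = M * (M + 1) / 2 := by
  have ht : M.toNat = (M.toNat - 1) + 1 := by omega
  have h : mult 0 0 M 2 = (M.toNat + 1).choose 2 := by
    rw [mult, if_pos hM, ht, mAux_twoK]
  refine ⟨h, ?_⟩
  rw [h, Nat.choose_two_right, Nat.add_sub_cancel]
  obtain ⟨c, hc⟩ := Nat.even_mul_succ_self M.toNat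
  have hc2 : (M.toNat + 1) * M.toNat = 2 * c := by rw [Nat.mul_comm]; omega
  have : ((M.toNat + 1) * M.toNat / 2 : ℕ) = c := by omega
  rw [this]
  have hM' : (M.toNat : ℤ) = M := Int.toNat_of_nonneg (by omega)
  have hmc : M * (M + 1) = 2 * c := by
    have := congrArg (Nat.cast : ℕ → ℤ) hc2
    push_cast at this
    rw [hM'] at this
    linarith
  rw [hmc, Int.mul_ediv_cancel_left _ (by norm_num)]
end

section
/- With m the multiplicity function defined by the recursion in the context: for every integer M ≥ 1, m(1,1,M,2) = C(M+1,2) = M(M+1)/2. -/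
lemma mAux_negk : ∀ n (a b k : ℤ), k < 0 → mAux n a b k = 0
  | 0, _, _, _, _ => rfl
  | 1, a, b, k, hk => by simp only [mAux, mBase]; split <;> omega
  | (n+2), a, b, k, hk => by simp only [mAux]; split <;> omega

lemma mAux_k0 : ∀ n (a b : ℤ), ¬(a = 0 ∧ b = 0) → mAux n a b 0 = 0
  | 0, _, _, _ => rfl
  | 1, a, b, h => by simp only [mAux, mBase]; split <;> omega
  | (n+2), a, b, h => by
      simp only [mAux]
      split
      · rw [mAux_k0 (n+1) a b h]
        simp [T1, T2, mAux_negk]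
      · rfl

lemma mAux_000 : ∀ n, mAux (n+1) 0 0 0 = 1
  | 0 => by decide
  | (n+1) => by
      show mAux (n+2) 0 0 0 = 1
      simp only [mAux]
      rw [if_pos (by norm_num)]
      rw [mAux_000 n]
      simp [T1, T2, mAux_negk]

lemma mAux_k1 : ∀ n (a b : ℤ), ¬(a = 1 ∧ b = 0) → mAux n a b 1 = 0
  | 0, _, _, _ => rfl
  | 1, a, b, h => by simp only [mAux, mBase]; split <;> omega
  | (n+2), a, b, h => by
      simp only [mAux]
      split
      · rename_i hg
        rw [mAux_k1 (n+1) a b h]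
        have e1 : (1:ℤ) - 1 = 0 := by norm_num
        rw [e1]
        simp only [T1, T2,
          mAux_k0 (n+1) (a+1) b (by omega),
          mAux_k0 (n+1) a (b+1) (by omega),
          mAux_k0 (n+1) (a-1) b (by omega),
          mAux_k0 (n+1) a (b-1) (by omega),
          mAux_negk (n+1) _ _ _ (by norm_num : (1:ℤ)-2 < 0),
          mAux_negk (n+1) _ _ _ (by norm_num : (1:ℤ)-3 < 0),
          mAux_negk (n+1) _ _ _ (by norm_num : (1:ℤ)-4 < 0)]
        simp
      · rfl

lemma mAux_101 : ∀ n, mAux (n+1) 1 0 1 = n + 1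
  | 0 => by decide
  | (n+1) => by
      show mAux (n+2) 1 0 1 = n + 2
      simp only [mAux]
      rw [if_pos (by norm_num)]
      rw [mAux_101 n]
      have e1 : (1:ℤ) - 1 = 0 := by norm_num
      rw [e1]
      simp only [T1, T2,
        mAux_k0 (n+1) (1+1) 0 (by omega),
        mAux_k0 (n+1) 1 (0+1) (by omega),
        mAux_k0 (n+1) 1 (0-1) (by omega),
        mAux_negk (n+1) _ _ _ (by norm_num : (1:ℤ)-2 < 0),
        mAux_negk (n+1) _ _ _ (by norm_num : (1:ℤ)-3 < 0),
        mAux_negk (n+1) _ _ _ (by norm_num : (1:ℤ)-4 < 0)]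
      have e0 : (1:ℤ) - 1 = 0 := by norm_num
      rw [e0, mAux_000 n]
      omega

lemma mAux_112 : ∀ n, 2 * mAux (n+1) 1 1 2 = (n+1) * (n+2)
  | 0 => by decide
  | (n+1) => by
      show 2 * mAux (n+2) 1 1 2 = (n+2) * (n+3)
      simp only [mAux]
      rw [if_pos (by norm_num)]
      have e1 : (2:ℤ) - 1 = 1 := by norm_num
      have e2 : (2:ℤ) - 2 = 0 := by norm_num
      rw [e1, e2]
      simp only [T1, T2,
        mAux_k1 (n+1) (1+1) 1 (by omega),
        mAux_k1 (n+1) 1 (1+1) (by omega),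
        mAux_k1 (n+1) (1-1) 1 (by omega),
        mAux_k0 (n+1) 1 1 (by omega),
        mAux_k0 (n+1) (1-1) (1+1) (by omega),
        mAux_k0 (n+1) (1+1) (1-1) (by omega),
        mAux_k0 (n+1) (1+1) (1+1) (by omega),
        mAux_negk (n+1) _ _ _ (by norm_num : (2:ℤ)-3 < 0),
        mAux_negk (n+1) _ _ _ (by norm_num : (2:ℤ)-4 < 0)]
      have e3 : (1:ℤ) - 1 = 0 := by norm_num
      rw [e3, mAux_000 n, mAux_101 n]
      have := mAux_112 n
      nlinarith [mAux_112 n]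


/-- For every integer `M ≥ 1`, `m(1,1,M,2) = C(M+1,2) = M(M+1)/2`. -/
theorem mult_one_one_two (M : ℤ) (hM : 1 ≤ M) :
    mult 1 1 M 2 = (M.toNat + 1).choose 2 ∧ (mult 1 1 M 2 : ℤ) = M * (M + 1) / 2 := by

  obtain ⟨n, hn⟩ : ∃ n : ℕ, M.toNat = n + 1 := ⟨M.toNat - 1, by omega⟩
  have hmult : mult 1 1 M 2 = mAux (n+1) 1 1 2 := by rw [mult, if_pos hM, hn]
  have h2 := mAux_112 n
  have hMn : M = (n:ℤ) + 1 := by omega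
  have hdvd : 2 ∣ (n+2) * (n+1) := by
    rw [Nat.mul_comm]; exact (Nat.even_mul_succ_self (n+1)).two_dvd
  constructor
  · rw [hmult, hn]
    refine Nat.eq_of_mul_eq_mul_left (by norm_num : 0 < 2) ?_
    rw [h2, Nat.choose_two_right]
    have e : n + 1 + 1 - 1 = n + 1 := rfl
    rw [e, Nat.mul_div_cancel' hdvd, Nat.mul_comm]
  · rw [hmult]
    have hcast : ((mAux (n+1) 1 1 2 : ℕ) : ℤ) * 2 = M * (M + 1) := by
      have hc := congrArg (fun x : ℕ => (x : ℤ)) h2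
      push_cast at hc
      rw [hMn]; linear_combination hc
    omega
end

section
/- With m the multiplicity function defined by the recursion in the context: for every integer M ≥ 1, m(1,0,M,3) = C(M,3) + 2·C(M+1,3) + M². -/
lemma mAux_neg_k : ∀ (n : ℕ) (a b k : ℤ), k < 0 → mAux n a b k = 0 := by
  intro n
  match n with
  | 0 => intro a b k hk; rfl
  | 1 =>
    intro a b k hk
    simp only [mAux, mBase]
    split
    · omega
    · rfl
  | (m + 2) =>
    intro a b k hk
    simp only [mAux]
    rw [if_neg (by omega)]

lemma T1_neg (n : ℕ) (a b k : ℤ) (hk : k < 0) : T1 (mAux n) a b k = 0 := by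
  simp [T1, mAux_neg_k _ _ _ _ hk]

lemma T2_neg (n : ℕ) (a b k : ℤ) (hk : k < 0) : T2 (mAux n) a b k = 0 := by
  simp [T2, mAux_neg_k _ _ _ _ hk]

lemma mk0 : ∀ (n : ℕ) (a b : ℤ), mAux n a b 0 = if 1 ≤ n ∧ a = 0 ∧ b = 0 then 1 else 0 := by
  intro n
  induction n with
  | zero => intro a b; simp [mAux]
  | succ m ih =>
    intro a b
    match m with
    | 0 =>
      simp only [mAux, mBase]
      split <;> split <;> first | rfl | omega | tauto
    | (m' + 1) =>
      simp only [mAux]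
      split
      · rw [ih, T1_neg _ _ _ (0-1 : ℤ) (by norm_num), T2_neg _ _ _ (0-2 : ℤ) (by norm_num),
          T1_neg _ _ _ (0-3 : ℤ) (by norm_num), mAux_neg_k _ _ _ (0-4 : ℤ) (by norm_num)]
        split <;> split <;> omega
      · split <;> omega

lemma mAux_invalid : ∀ (n : ℕ) (a b k : ℤ), ¬(0 ≤ b ∧ b ≤ a) → mAux n a b k = 0 := by
  intro n
  match n with
  | 0 => intro a b k h; rfl
  | 1 =>
    intro a b k h
    simp only [mAux, mBase]
    split
    · omega
    · rfl
  | (m + 2) =>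
    intro a b k h
    simp only [mAux]
    rw [if_neg (by omega)]

lemma mk1 : ∀ (n : ℕ) (a b : ℤ), mAux n a b 1 = if a = 1 ∧ b = 0 then n else 0 := by
  intro n
  induction n with
  | zero => intro a b; simp [mAux]
  | succ m ih =>
    intro a b
    match m with
    | 0 =>
      simp only [mAux, mBase]
      split <;> split <;> first | rfl | omega | tauto
    | (m' + 1) =>
      simp only [mAux]
      split
      · rw [ih, T2_neg _ _ _ ((1:ℤ)-2) (by norm_num), T1_neg _ _ _ ((1:ℤ)-3) (by norm_num),
          mAux_neg_k _ _ _ ((1:ℤ)-4) (by norm_num)]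
        simp only [T1, show (1:ℤ)-1 = 0 by norm_num, mk0]
        split_ifs <;> omega
      · split <;> omega

lemma mk2_00 : ∀ (n : ℕ), mAux n 0 0 2 = (n+1).choose 2 := by
  intro n
  induction n with
  | zero => rfl
  | succ m ih =>
    match m, ih with
    | 0, _ => rfl
    | (m' + 1), ih =>
      simp only [mAux]
      rw [if_pos (by norm_num), ih, T1_neg _ _ _ ((2:ℤ)-3) (by norm_num),
        mAux_neg_k _ _ _ ((2:ℤ)-4) (by norm_num)]
      simp only [T1, T2, eps, show (2:ℤ)-1 = 1 by norm_num, show (2:ℤ)-2 = 0 by norm_num,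
        mk0, mk1]
      norm_num
      simp only [Nat.choose_succ_succ, Nat.choose_zero_right, Nat.choose_one_right]
      ring

lemma mk2_11 : ∀ (n : ℕ), mAux n 1 1 2 = (n+1).choose 2 := by
  intro n
  induction n with
  | zero => rfl
  | succ m ih =>
    match m, ih with
    | 0, _ => rfl
    | (m' + 1), ih =>
      simp only [mAux]
      rw [if_pos (by norm_num), ih, T1_neg _ _ _ ((2:ℤ)-3) (by norm_num),
        mAux_neg_k _ _ _ ((2:ℤ)-4) (by norm_num)]
      simp only [T1, T2, eps, show (2:ℤ)-1 = 1 by norm_num, show (2:ℤ)-2 = 0 by norm_num,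
        mk0, mk1]
      norm_num
      simp only [Nat.choose_succ_succ, Nat.choose_zero_right, Nat.choose_one_right]
      ring

lemma mk2_20 : ∀ (n : ℕ), mAux n 2 0 2 = n.choose 2 := by
  intro n
  induction n with
  | zero => rfl
  | succ m ih =>
    match m, ih with
    | 0, _ => rfl
    | (m' + 1), ih =>
      simp only [mAux]
      rw [if_pos (by norm_num), ih, T1_neg _ _ _ ((2:ℤ)-3) (by norm_num),
        mAux_neg_k _ _ _ ((2:ℤ)-4) (by norm_num)]
      simp only [T1, T2, eps, show (2:ℤ)-1 = 1 by norm_num, show (2:ℤ)-2 = 0 by norm_num,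
        mk0, mk1]
      norm_num
      simp only [Nat.choose_succ_succ, Nat.choose_zero_right, Nat.choose_one_right]
      ring

lemma mk3 : ∀ (n : ℕ), mAux n 1 0 3 = n.choose 3 + 2 * (n+1).choose 3 + n^2 := by
  intro n
  induction n with
  | zero => rfl
  | succ m ih =>
    match m, ih with
    | 0, _ => rfl
    | (m' + 1), ih =>
      simp only [mAux]
      rw [if_pos (by norm_num), ih, mAux_neg_k _ _ _ ((3:ℤ)-4) (by norm_num)]
      simp only [T1, T2, eps, show (3:ℤ)-1 = 2 by norm_num, show (3:ℤ)-2 = 1 by norm_num,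
        show (3:ℤ)-3 = 0 by norm_num, mk1, mk0]
      norm_num
      rw [mk2_20, mk2_11, mk2_00, mAux_invalid _ 1 (-1) 2 (by norm_num)]
      simp only [Nat.choose_succ_succ, Nat.choose_zero_right, Nat.choose_one_right]
      ring

/-- For every integer `M ≥ 1`, `m(1,0,M,3) = C(M,3) + 2·C(M+1,3) + M²`. -/
theorem mult_one_zero_three (M : ℤ) (hM : 1 ≤ M) :
    mult 1 0 M 3 = M.toNat.choose 3 + 2 * (M.toNat + 1).choose 3 + M.toNat ^ 2 := by
  rw [mult, if_pos hM, mk3]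
end

section
/- With m the multiplicity function defined by the recursion in the context: for every integer M ≥ 1, m(0,0,M,4) = M(M+1)(M²+M+2)/8. -/
lemma mAux_vanish (n : ℕ) (a b k : ℤ) (h : ¬(b ≤ a ∧ 0 ≤ b ∧ 0 ≤ k ∧ a + b ≤ k)) :
    mAux n a b k = 0 := by
  induction n using Nat.strong_induction_on generalizing a b k h with
  | _ n ih =>
    match n with
    | 0 => rfl
    | 1 =>
      simp only [mAux, mBase]
      rw [if_neg]
      rintro (⟨rfl,rfl,rfl⟩|⟨rfl,rfl,rfl⟩|⟨rfl,rfl,rfl⟩|⟨rfl,rfl,rfl⟩|⟨rfl,rfl,rfl⟩|⟨rfl,rfl,rfl⟩) <;> omega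
    | (n + 2) =>
      rw [mAux]
      by_cases hc : b ≤ a ∧ 0 ≤ b ∧ 0 ≤ k
      · rw [if_pos hc]
        have hk : k < a + b := by omega
        simp only [T1, T2]
        rw [ih (n+1) (by omega) _ _ _ (by intro hh; omega),
            ih (n+1) (by omega) (a+1) b (k-1) (by intro hh; omega),
            ih (n+1) (by omega) a (b+1) (k-1) (by intro hh; omega),
            ih (n+1) (by omega) (a-1) b (k-1) (by intro hh; omega),
            ih (n+1) (by omega) a (b-1) (k-1) (by intro hh; omega),
            ih (n+1) (by omega) a b (k-2) (by intro hh; omega),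
            ih (n+1) (by omega) (a-1) (b-1) (k-2) (by intro hh; omega),
            ih (n+1) (by omega) (a-1) (b+1) (k-2) (by intro hh; omega),
            ih (n+1) (by omega) (a+1) (b-1) (k-2) (by intro hh; omega),
            ih (n+1) (by omega) (a+1) (b+1) (k-2) (by intro hh; omega),
            ih (n+1) (by omega) (a+1) b (k-3) (by intro hh; omega),
            ih (n+1) (by omega) a (b+1) (k-3) (by intro hh; omega),
            ih (n+1) (by omega) (a-1) b (k-3) (by intro hh; omega),
            ih (n+1) (by omega) a (b-1) (k-3) (by intro hh; omega),
            ih (n+1) (by omega) a b (k-4) (by intro hh; omega)]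
        simp
      · rw [if_neg hc]

def Pstmt (n : ℕ) : Prop :=
  (mAux (n+1) 0 0 0 : ℤ) * 24 = (24) * 1 ∧
  (mAux (n+1) 0 0 1 : ℤ) * 24 = 0 ∧
  (mAux (n+1) 1 0 1 : ℤ) * 24 = (24) * ((n:ℤ)+1) ∧
  (mAux (n+1) 0 0 2 : ℤ) * 24 = (12) * ((n:ℤ)+1) + (12) * ((n:ℤ)+1)^2 ∧
  (mAux (n+1) 1 0 2 : ℤ) * 24 = 0 ∧
  (mAux (n+1) 1 1 2 : ℤ) * 24 = (12) * ((n:ℤ)+1) + (12) * ((n:ℤ)+1)^2 ∧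
  (mAux (n+1) 2 0 2 : ℤ) * 24 = (-12) * ((n:ℤ)+1) + (12) * ((n:ℤ)+1)^2 ∧
  (mAux (n+1) 0 0 3 : ℤ) * 24 = 0 ∧
  (mAux (n+1) 1 0 3 : ℤ) * 24 = (12) * ((n:ℤ)+1)^2 + (12) * ((n:ℤ)+1)^3 ∧
  (mAux (n+1) 1 1 3 : ℤ) * 24 = 0 ∧
  (mAux (n+1) 2 0 3 : ℤ) * 24 = 0 ∧
  (mAux (n+1) 2 1 3 : ℤ) * 24 = (-8) * ((n:ℤ)+1) + (8) * ((n:ℤ)+1)^3 ∧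
  (mAux (n+1) 3 0 3 : ℤ) * 24 = (8) * ((n:ℤ)+1) + (-12) * ((n:ℤ)+1)^2 + (4) * ((n:ℤ)+1)^3 ∧
  (mAux (n+1) 0 0 4 : ℤ) * 24 = (6) * ((n:ℤ)+1) + (9) * ((n:ℤ)+1)^2 + (6) * ((n:ℤ)+1)^3 + (3) * ((n:ℤ)+1)^4 ∧
  (mAux (n+1) 1 0 4 : ℤ) * 24 = 0 ∧
  (mAux (n+1) 1 1 4 : ℤ) * 24 = (-6) * ((n:ℤ)+1) + (-5) * ((n:ℤ)+1)^2 + (6) * ((n:ℤ)+1)^3 + (5) * ((n:ℤ)+1)^4 ∧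
  (mAux (n+1) 2 0 4 : ℤ) * 24 = (-6) * ((n:ℤ)+1)^2 + (6) * ((n:ℤ)+1)^4 ∧
  (mAux (n+1) 2 1 4 : ℤ) * 24 = 0 ∧
  (mAux (n+1) 2 2 4 : ℤ) * 24 = (-2) * ((n:ℤ)+1)^2 + (2) * ((n:ℤ)+1)^4 ∧
  (mAux (n+1) 3 0 4 : ℤ) * 24 = 0 ∧
  (mAux (n+1) 3 1 4 : ℤ) * 24 = (6) * ((n:ℤ)+1) + (-3) * ((n:ℤ)+1)^2 + (-6) * ((n:ℤ)+1)^3 + (3) * ((n:ℤ)+1)^4 ∧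
  (mAux (n+1) 4 0 4 : ℤ) * 24 = (-6) * ((n:ℤ)+1) + (11) * ((n:ℤ)+1)^2 + (-6) * ((n:ℤ)+1)^3 + (1) * ((n:ℤ)+1)^4

lemma key_s16 : ∀ n : ℕ, Pstmt n := by
  intro n
  induction n with
  | zero =>
    refine ⟨?_, ?_, ?_, ?_, ?_, ?_, ?_, ?_, ?_, ?_, ?_, ?_, ?_, ?_, ?_, ?_, ?_, ?_, ?_, ?_, ?_, ?_⟩ <;> norm_num [mAux, mBase]
  | succ n ih =>
    obtain ⟨h000, h001, h101, h002, h102, h112, h202, h003, h103, h113, h203, h213, h303, h004, h104, h114, h204, h214, h224, h304, h314, h404⟩ := ih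
    refine ⟨?_, ?_, ?_, ?_, ?_, ?_, ?_, ?_, ?_, ?_, ?_, ?_, ?_, ?_, ?_, ?_, ?_, ?_, ?_, ?_, ?_, ?_⟩
    · have hexp : mAux (n+2) 0 0 0 = mAux (n+1) 0 0 0 := by
        rw [mAux]; norm_num [T1, T2, eps, mAux_vanish]; try ring
      rw [show n+1+1 = n+2 from rfl, hexp]
      push_cast
      linear_combination h000
    · have hexp : mAux (n+2) 0 0 1 = mAux (n+1) 0 0 1 := by
        rw [mAux]; norm_num [T1, T2, eps, mAux_vanish]; try ring
      rw [show n+1+1 = n+2 from rfl, hexp]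
      push_cast
      linear_combination h001
    · have hexp : mAux (n+2) 1 0 1 = mAux (n+1) 1 0 1 + mAux (n+1) 0 0 0 := by
        rw [mAux]; norm_num [T1, T2, eps, mAux_vanish]; try ring
      rw [show n+1+1 = n+2 from rfl, hexp]
      push_cast
      linear_combination h101 + h000
    · have hexp : mAux (n+2) 0 0 2 = mAux (n+1) 0 0 2 + mAux (n+1) 1 0 1 + mAux (n+1) 0 0 0 := by
        rw [mAux]; norm_num [T1, T2, eps, mAux_vanish]; try ring
      rw [show n+1+1 = n+2 from rfl, hexp]
      push_cast
      linear_combination h002 + h101 + h000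
    · have hexp : mAux (n+2) 1 0 2 = mAux (n+1) 1 0 2 + mAux (n+1) 0 0 1 := by
        rw [mAux]; norm_num [T1, T2, eps, mAux_vanish]; try ring
      rw [show n+1+1 = n+2 from rfl, hexp]
      push_cast
      linear_combination h102 + h001
    · have hexp : mAux (n+2) 1 1 2 = mAux (n+1) 1 1 2 + mAux (n+1) 1 0 1 + mAux (n+1) 0 0 0 := by
        rw [mAux]; norm_num [T1, T2, eps, mAux_vanish]; try ring
      rw [show n+1+1 = n+2 from rfl, hexp]
      push_cast
      linear_combination h112 + h101 + h000
    · have hexp : mAux (n+2) 2 0 2 = mAux (n+1) 2 0 2 + mAux (n+1) 1 0 1 := by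
        rw [mAux]; norm_num [T1, T2, eps, mAux_vanish]; try ring
      rw [show n+1+1 = n+2 from rfl, hexp]
      push_cast
      linear_combination h202 + h101
    · have hexp : mAux (n+2) 0 0 3 = mAux (n+1) 0 0 3 + mAux (n+1) 1 0 2 + mAux (n+1) 0 0 1 := by
        rw [mAux]; norm_num [T1, T2, eps, mAux_vanish]; try ring
      rw [show n+1+1 = n+2 from rfl, hexp]
      push_cast
      linear_combination h003 + h102 + h001
    · have hexp : mAux (n+2) 1 0 3 = mAux (n+1) 1 0 3 + mAux (n+1) 2 0 2 + mAux (n+1) 1 1 2 + mAux (n+1) 0 0 2 + 2 * mAux (n+1) 1 0 1 + mAux (n+1) 0 0 0 := by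
        rw [mAux]; norm_num [T1, T2, eps, mAux_vanish]; try ring
      rw [show n+1+1 = n+2 from rfl, hexp]
      push_cast
      linear_combination h103 + h202 + h112 + h002 + 2 * h101 + h000
    · have hexp : mAux (n+2) 1 1 3 = mAux (n+1) 1 1 3 + mAux (n+1) 1 0 2 + mAux (n+1) 0 0 1 := by
        rw [mAux]; norm_num [T1, T2, eps, mAux_vanish]; try ring
      rw [show n+1+1 = n+2 from rfl, hexp]
      push_cast
      linear_combination h113 + h102 + h001
    · have hexp : mAux (n+2) 2 0 3 = mAux (n+1) 2 0 3 + mAux (n+1) 1 0 2 := by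
        rw [mAux]; norm_num [T1, T2, eps, mAux_vanish]; try ring
      rw [show n+1+1 = n+2 from rfl, hexp]
      push_cast
      linear_combination h203 + h102
    · have hexp : mAux (n+2) 2 1 3 = mAux (n+1) 2 1 3 + mAux (n+1) 1 1 2 + mAux (n+1) 2 0 2 + mAux (n+1) 1 0 1 := by
        rw [mAux]; norm_num [T1, T2, eps, mAux_vanish]; try ring
      rw [show n+1+1 = n+2 from rfl, hexp]
      push_cast
      linear_combination h213 + h112 + h202 + h101
    · have hexp : mAux (n+2) 3 0 3 = mAux (n+1) 3 0 3 + mAux (n+1) 2 0 2 := by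
        rw [mAux]; norm_num [T1, T2, eps, mAux_vanish]; try ring
      rw [show n+1+1 = n+2 from rfl, hexp]
      push_cast
      linear_combination h303 + h202
    · have hexp : mAux (n+2) 0 0 4 = mAux (n+1) 0 0 4 + mAux (n+1) 1 0 3 + mAux (n+1) 0 0 2 + mAux (n+1) 1 1 2 + mAux (n+1) 1 0 1 + mAux (n+1) 0 0 0 := by
        rw [mAux]; norm_num [T1, T2, eps, mAux_vanish]; try ring
      rw [show n+1+1 = n+2 from rfl, hexp]
      push_cast
      linear_combination h004 + h103 + h002 + h112 + h101 + h000
    · have hexp : mAux (n+2) 1 0 4 = mAux (n+1) 1 0 4 + mAux (n+1) 2 0 3 + mAux (n+1) 1 1 3 + mAux (n+1) 0 0 3 + 2 * mAux (n+1) 1 0 2 + mAux (n+1) 0 0 1 := by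
        rw [mAux]; norm_num [T1, T2, eps, mAux_vanish]; try ring
      rw [show n+1+1 = n+2 from rfl, hexp]
      push_cast
      linear_combination h104 + h203 + h113 + h003 + 2 * h102 + h001
    · have hexp : mAux (n+2) 1 1 4 = mAux (n+1) 1 1 4 + mAux (n+1) 2 1 3 + mAux (n+1) 1 0 3 + mAux (n+1) 1 1 2 + mAux (n+1) 0 0 2 + mAux (n+1) 2 0 2 + mAux (n+1) 1 0 1 := by
        rw [mAux]; norm_num [T1, T2, eps, mAux_vanish]; try ring
      rw [show n+1+1 = n+2 from rfl, hexp]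
      push_cast
      linear_combination h114 + h213 + h103 + h112 + h002 + h202 + h101
    · have hexp : mAux (n+2) 2 0 4 = mAux (n+1) 2 0 4 + mAux (n+1) 3 0 3 + mAux (n+1) 2 1 3 + mAux (n+1) 1 0 3 + 2 * mAux (n+1) 2 0 2 + mAux (n+1) 1 1 2 + mAux (n+1) 1 0 1 := by
        rw [mAux]; norm_num [T1, T2, eps, mAux_vanish]; try ring
      rw [show n+1+1 = n+2 from rfl, hexp]
      push_cast
      linear_combination h204 + h303 + h213 + h103 + 2 * h202 + h112 + h101
    · have hexp : mAux (n+2) 2 1 4 = mAux (n+1) 2 1 4 + mAux (n+1) 1 1 3 + mAux (n+1) 2 0 3 + mAux (n+1) 1 0 2 := by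
        rw [mAux]; norm_num [T1, T2, eps, mAux_vanish]; try ring
      rw [show n+1+1 = n+2 from rfl, hexp]
      push_cast
      linear_combination h214 + h113 + h203 + h102
    · have hexp : mAux (n+2) 2 2 4 = mAux (n+1) 2 2 4 + mAux (n+1) 2 1 3 + mAux (n+1) 1 1 2 := by
        rw [mAux]; norm_num [T1, T2, eps, mAux_vanish]; try ring
      rw [show n+1+1 = n+2 from rfl, hexp]
      push_cast
      linear_combination h224 + h213 + h112
    · have hexp : mAux (n+2) 3 0 4 = mAux (n+1) 3 0 4 + mAux (n+1) 2 0 3 := by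
        rw [mAux]; norm_num [T1, T2, eps, mAux_vanish]; try ring
      rw [show n+1+1 = n+2 from rfl, hexp]
      push_cast
      linear_combination h304 + h203
    · have hexp : mAux (n+2) 3 1 4 = mAux (n+1) 3 1 4 + mAux (n+1) 2 1 3 + mAux (n+1) 3 0 3 + mAux (n+1) 2 0 2 := by
        rw [mAux]; norm_num [T1, T2, eps, mAux_vanish]; try ring
      rw [show n+1+1 = n+2 from rfl, hexp]
      push_cast
      linear_combination h314 + h213 + h303 + h202
    · have hexp : mAux (n+2) 4 0 4 = mAux (n+1) 4 0 4 + mAux (n+1) 3 0 3 := by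
        rw [mAux]; norm_num [T1, T2, eps, mAux_vanish]; try ring
      rw [show n+1+1 = n+2 from rfl, hexp]
      push_cast
      linear_combination h404 + h303

/-- For every integer `M ≥ 1`, `m(0,0,M,4) = M(M+1)(M²+M+2)/8`. -/
theorem mult_zero_zero_four (M : ℤ) (hM : 1 ≤ M) :
    (mult 0 0 M 4 : ℤ) = M * (M + 1) * (M ^ 2 + M + 2) / 8 := by
  have hmn : M.toNat = (M - 1).toNat + 1 := by omega
  have hkey := (key_s16 (M - 1).toNat).2.2.2.2.2.2.2.2.2.2.2.2.2.1
  have hcast : (((M - 1).toNat : ℤ) + 1) = M := by omega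
  rw [hcast] at hkey
  have hmult : mult 0 0 M 4 = mAux ((M - 1).toNat + 1) 0 0 4 := by
    rw [mult, if_pos hM, hmn]
  rw [hmult]
  have h8 : (mAux ((M - 1).toNat + 1) 0 0 4 : ℤ) * 8 = M * (M + 1) * (M ^ 2 + M + 2) := by
    have : (mAux ((M - 1).toNat + 1) 0 0 4 : ℤ) * 24 = 3 * (M * (M + 1) * (M ^ 2 + M + 2)) := by
      linear_combination hkey
    linarith
  omega
end
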